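/- arXiv:1405.1533 — 5 statements merged into one kernel-verified Lean document; each statement's English description precedes it below -/
import Mathlib

section
/- Let T ≥ 1 and let y_1,…,y_T ∈ [0,1]. For each t let g_t ∈ [−M, M] be a subgradient at ŷ_t of the convex map x ↦ ℓ(x, y_t) on [0,1] (that is, ℓ(x, y_t) ≥ ℓ(ŷ_t, y_t) + g_t·(x − ŷ_t) for all x ∈ [0,1]), let η_t = √(log 2)/(M·√t), and let the predictions be defined recursively by ŷ_t = exp(−η_t·∑_{s=1}^{t−1} g_s) / (1 + exp(−η_t·∑_{s=1}^{t−1} g_s)). Then ∑_{t=1}^T ℓ(ŷ_t, y_t) ≤ inf_{y ∈ [0,1]} ∑_{t=1}^T ℓ(y, y_t) + 2M·√(T·log 2). -/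
/-
Reduce to linear losses: by the subgradient inequality the regret against a constant `c` is at
most `∑ g_t ŷ_t - c ∑ g_t`. The forecaster is exponential weights on two experts with cumulative
losses `0` and `G_t = ∑_{s ≤ t} g_s`; its potential `Φ_η(G) = -(1/η) log((1 + e^{-ηG})/2)` grows
by at least `g_t ŷ_t - η_t g_t²/2` per round (Hoeffding's bound for a Bernoulli variable), does
not decrease when `η` decreases (concavity of `x ↦ x^r` for `r ≤ 1`), and at the end is at most
`c G_T + log 2 / η_T`. For `η_t = √(log 2)/(M √t)`, both `log 2 / η_T` and `(M²/2) ∑ η_t` are at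
most `M √(T log 2)`, the latter because `∑_{t ≤ T} 1/√t ≤ 2√T`.
-/

open Real Finset

lemma Real.exp_le_quadratic_of_nonpos {u : ℝ} (hu : u ≤ 0) : exp u ≤ 1 + u + u ^ 2 / 2 := by
  have hcubic := sum_le_exp_of_nonneg (neg_nonneg.2 hu) 4
  simp only [sum_range_succ, sum_range_zero, Nat.factorial] at hcubic
  push_cast at hcubic
  have hq : 0 < 1 + u + u ^ 2 / 2 := by nlinarith [sq_nonneg (u + 1)]
  rw [← inv_inv (exp u), ← exp_neg, inv_le_comm₀ (exp_pos _) hq]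
  refine le_trans ?_ hcubic
  rw [inv_le_iff_one_le_mul₀ hq]
  -- the product is `1 - u³/6 + u⁴/12 - u⁵/12`
  nlinarith [mul_nonneg (mul_nonneg (neg_nonneg.2 hu) (sq_nonneg u)) (sq_nonneg (u - 1))]

lemma one_sub_add_mul_exp_le_of_nonpos {p u : ℝ} (hp₀ : 0 ≤ p) (hp₁ : p ≤ 1) (hu : u ≤ 0) :
    1 - p + p * exp u ≤ exp (p * u + u ^ 2 / 2) :=
  calc 1 - p + p * exp u = p * (exp u - 1) + 1 := by ring
    _ ≤ exp (p * (exp u - 1)) := add_one_le_exp _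
    _ ≤ exp (p * u + u ^ 2 / 2) := by
      gcongr
      nlinarith [exp_le_quadratic_of_nonpos hu, sq_nonneg u]

/-- Hoeffding-type bound on the moment generating function of a Bernoulli(`p`) variable. -/
lemma one_sub_add_mul_exp_le {p u : ℝ} (hp₀ : 0 ≤ p) (hp₁ : p ≤ 1) :
    1 - p + p * exp u ≤ exp (p * u + u ^ 2 / 2) := by
  rcases le_or_gt u 0 with hu | hu
  · exact one_sub_add_mul_exp_le_of_nonpos hp₀ hp₁ hu
  -- swap the two outcomes: `p ↦ 1 - p`, `u ↦ -u`
  have h := one_sub_add_mul_exp_le_of_nonpos (p := 1 - p) (by linarith) (by linarith)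
    (neg_nonpos.2 hu.le)
  calc 1 - p + p * exp u = exp u * (1 - (1 - p) + (1 - p) * exp (-u)) := by
        rw [exp_neg]; field_simp; ring
    _ ≤ exp u * exp ((1 - p) * -u + (-u) ^ 2 / 2) := by gcongr
    _ = exp (p * u + u ^ 2 / 2) := by rw [← exp_add]; ring_nf

lemma Real.sum_Icc_one_div_sqrt_le (n : ℕ) : ∑ t ∈ Icc 1 n, 1 / √t ≤ 2 * √n := by
  induction n with
  | zero => simp
  | succ n ih =>
    rw [sum_Icc_succ_top (by omega)]
    have hn : 0 < √(n + 1 : ℝ) := by positivity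
    have hsq : √(n + 1 : ℝ) ^ 2 = √n ^ 2 + 1 := by
      rw [sq_sqrt (by positivity), sq_sqrt (by positivity)]
    have hstep : 1 / √(n + 1 : ℝ) ≤ 2 * √(n + 1 : ℝ) - 2 * √n := by
      rw [div_le_iff₀ hn]
      nlinarith [sq_nonneg (√(n + 1 : ℝ) - √n)]
    push_cast
    linarith

namespace EG

/-- `-(1/η) log((e^{-η·0} + e^{-η G}) / 2)`, for the experts `0` and `1` with cumulative linear
losses `0` and `G`; `weight η G` is the resulting weight of the expert `1`. -/
noncomputable def potential (η G : ℝ) : ℝ := -log ((1 + exp (-η * G)) / 2) / η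

noncomputable def weight (η G : ℝ) : ℝ := exp (-η * G) / (1 + exp (-η * G))

@[simp] lemma potential_zero_right (η : ℝ) : potential η 0 = 0 := by
  simp [potential]

lemma mul_weight_add_potential_le {η : ℝ} (hη : 0 < η) (G g : ℝ) :
    g * weight η G + potential η G ≤ potential η (G + g) + η * g ^ 2 / 2 := by
  set A := exp (-η * G)
  set p := A / (1 + A) with hp
  set B := 1 - p + p * exp (-η * g)
  have hA : 0 < A := exp_pos _
  have hp₀ : 0 ≤ p := by positivity
  have hp₁ : p < 1 := by rw [hp, div_lt_one (by positivity)]; linarith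
  have hB : 0 < B := by nlinarith [exp_pos (-η * g)]
  have hfactor : (1 + exp (-η * (G + g))) / 2 = (1 + A) / 2 * B := by
    rw [show -η * (G + g) = -η * G + -η * g by ring, exp_add]
    simp only [B, hp, A]
    field_simp
    ring
  have hlogB : log B ≤ p * (-η * g) + (-η * g) ^ 2 / 2 :=
    (log_le_iff_le_exp hB).2 (one_sub_add_mul_exp_le hp₀ hp₁.le)
  rw [potential, potential, hfactor, log_mul (by positivity) hB.ne']
  change g * p + _ ≤ _
  calc g * p + -log ((1 + A) / 2) / η = (-log ((1 + A) / 2) + η * g * p) / η := by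
        field_simp; ring
    _ ≤ (-(log ((1 + A) / 2) + log B) + η * (η * g ^ 2 / 2)) / η :=
        div_le_div_of_nonneg_right (by nlinarith) hη.le
    _ = -(log ((1 + A) / 2) + log B) / η + η * g ^ 2 / 2 := by
        field_simp

lemma potential_le_potential {η η' : ℝ} (hη' : 0 < η') (hη'η : η' ≤ η) (G : ℝ) :
    potential η G ≤ potential η' G := by
  have hη : 0 < η := hη'.trans_le hη'η
  set s := exp (-η * G)
  set r := η' / η
  have hs : 0 < s := exp_pos _
  have hr₀ : 0 < r := div_pos hη' hη
  have hpow : s ^ r = exp (-η' * G) := by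
    rw [← exp_mul]; congr 1; simp only [r]; field_simp
  have hconc : (1 + exp (-η' * G)) / 2 ≤ ((1 + s) / 2) ^ r := by
    have h := (concaveOn_rpow hr₀.le (div_le_one_of_le₀ hη'η hη.le)).2
      (Set.mem_Ici.2 zero_le_one) (Set.mem_Ici.2 hs.le) (by norm_num : (0 : ℝ) ≤ 1 / 2)
      (by norm_num : (0 : ℝ) ≤ 1 / 2) (by norm_num)
    simp only [smul_eq_mul, one_rpow, hpow] at h
    rw [show (1 + s) / 2 = 1 / 2 * 1 + 1 / 2 * s by ring]
    linarith
  have hlog : log ((1 + exp (-η' * G)) / 2) ≤ r * log ((1 + s) / 2) := by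
    rw [← log_rpow (by positivity)]
    exact log_le_log (by positivity) hconc
  calc potential η G = -(r * log ((1 + s) / 2)) / η' := by
        simp only [potential, r, s]; field_simp
    _ ≤ potential η' G := div_le_div_of_nonneg_right (neg_le_neg hlog) hη'.le

lemma potential_le {η : ℝ} (hη : 0 < η) (G : ℝ) {c : ℝ} (hc : c ∈ Set.Icc (0 : ℝ) 1) :
    potential η G ≤ c * G + log 2 / η := by
  have hconv : exp (c * (-η * G)) ≤ 1 + exp (-η * G) := by
    have h := convexOn_exp.2 (Set.mem_univ 0) (Set.mem_univ (-η * G)) (sub_nonneg.2 hc.2) hc.1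
      (sub_add_cancel 1 c)
    simp only [smul_eq_mul, mul_zero, zero_add, exp_zero, mul_one] at h
    nlinarith [mul_le_mul_of_nonneg_right hc.2 (exp_pos (-η * G)).le, hc.1]
  have hlog : c * (-η * G) - log 2 ≤ log ((1 + exp (-η * G)) / 2) := by
    rw [← log_exp (c * (-η * G)), ← log_div (exp_pos _).ne' two_ne_zero]
    exact log_le_log (by positivity) (by linarith)
  calc potential η G ≤ (c * η * G + log 2) / η := div_le_div_of_nonneg_right (by linarith) hη.le
    _ = c * G + log 2 / η := by field_simp

lemma sum_mul_weight_le (η g : ℕ → ℝ) (hη_pos : ∀ t, 1 ≤ t → 0 < η t)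
    (hη_anti : AntitoneOn η (Set.Ici 1)) (n : ℕ) :
    ∑ t ∈ Icc 1 n, g t * weight (η t) (∑ s ∈ Icc 1 (t - 1), g s) ≤
      potential (η n) (∑ s ∈ Icc 1 n, g s) + ∑ t ∈ Icc 1 n, η t * g t ^ 2 / 2 := by
  induction n with
  | zero => simp
  | succ n ih =>
    simp only [sum_Icc_succ_top (Nat.le_add_left 1 n), Nat.add_sub_cancel]
    set G := ∑ s ∈ Icc 1 n, g s
    have hmono : potential (η n) G ≤ potential (η (n + 1)) G := by
      rcases n.eq_zero_or_pos with rfl | hn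
      · simp [G]
      exact potential_le_potential (hη_pos _ (by omega))
        (hη_anti (Set.mem_Ici.2 hn) (Set.mem_Ici.2 (by omega)) (by omega)) G
    linarith [mul_weight_add_potential_le (hη_pos (n + 1) (by omega)) G (g (n + 1))]

lemma sum_mul_weight_sqrt_le {T : ℕ} (hT : 1 ≤ T) {M : ℝ} (hM : 0 < M) (g : ℕ → ℝ)
    (hg : ∀ t ∈ Icc 1 T, |g t| ≤ M) {c : ℝ} (hc : c ∈ Set.Icc (0 : ℝ) 1) :
    ∑ t ∈ Icc 1 T, g t * weight (√(log 2) / (M * √t)) (∑ s ∈ Icc 1 (t - 1), g s) ≤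
      c * ∑ t ∈ Icc 1 T, g t + 2 * M * √(T * log 2) := by
  set L := √(log 2)
  have hL : 0 < L := sqrt_pos.2 (log_pos one_lt_two)
  have hL2 : L ^ 2 = log 2 := sq_sqrt (log_pos one_lt_two).le
  set η : ℕ → ℝ := fun t ↦ L / (M * √t)
  have hη_pos : ∀ t, 1 ≤ t → 0 < η t := fun t ht ↦ by
    have : (0 : ℝ) < √t := sqrt_pos.2 (by exact_mod_cast ht)
    positivity
  have hη_anti : AntitoneOn η (Set.Ici 1) := fun a ha b _ hab ↦ by
    have : (0 : ℝ) < √a := sqrt_pos.2 (by exact_mod_cast ha)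
    have : √(a : ℝ) ≤ √b := sqrt_le_sqrt (by exact_mod_cast hab)
    dsimp only [η]
    gcongr
  have hT' : (0 : ℝ) < √T := sqrt_pos.2 (by exact_mod_cast hT)
  have hpot := potential_le (hη_pos T hT) (∑ t ∈ Icc 1 T, g t) hc
  have hlast : log 2 / η T = M * (√T * L) := by
    simp only [η, ← hL2]; field_simp
  have hsum : ∑ t ∈ Icc 1 T, η t * g t ^ 2 / 2 ≤ M * (√T * L) :=
    calc ∑ t ∈ Icc 1 T, η t * g t ^ 2 / 2 ≤ ∑ t ∈ Icc 1 T, M * L / 2 * (1 / √t) := by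
          refine sum_le_sum fun t ht ↦ ?_
          have hsq : g t ^ 2 ≤ M ^ 2 := sq_le_sq' (abs_le.1 (hg t ht)).1 (abs_le.1 (hg t ht)).2
          calc η t * g t ^ 2 / 2 ≤ η t * M ^ 2 / 2 := by gcongr
            _ = M * L / 2 * (1 / √t) := by simp only [η]; field_simp
      _ ≤ M * L / 2 * (2 * √T) := by
          rw [← mul_sum]; gcongr; exact sum_Icc_one_div_sqrt_le T
      _ = M * (√T * L) := by ring
  calc _ ≤ potential (η T) (∑ s ∈ Icc 1 T, g s) + ∑ t ∈ Icc 1 T, η t * g t ^ 2 / 2 :=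
        sum_mul_weight_le η g hη_pos hη_anti T
    _ ≤ c * ∑ t ∈ Icc 1 T, g t + 2 * M * √(T * log 2) := by
        rw [sqrt_mul (Nat.cast_nonneg T)]
        linarith

end EG

open EG in
theorem stmt_3_general (T : ℕ) (hT : 1 ≤ T) (M : ℝ) (hM : 0 < M)
    (ℓ : ℝ → ℝ → ℝ)
    (y : ℕ → ℝ)
    (yhat : ℕ → ℝ) (g : ℕ → ℝ)
    -- `g t` is a subgradient at `yhat t`, bounded by `M` in absolute value:
    (hg_bdd : ∀ t, 1 ≤ t → t ≤ T → g t ∈ Set.Icc (-M) M)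
    (hg_subgrad : ∀ t, 1 ≤ t → t ≤ T → ∀ x ∈ Set.Icc (0:ℝ) 1,
      ℓ (yhat t) (y t) + g t * (x - yhat t) ≤ ℓ x (y t))
    -- the EG predictions:
    (hyhat : ∀ t, 1 ≤ t → t ≤ T →
      yhat t = Real.exp (-(Real.sqrt (Real.log 2) / (M * Real.sqrt t)) *
              ∑ s ∈ Finset.Icc 1 (t - 1), g s) /
            (1 + Real.exp (-(Real.sqrt (Real.log 2) / (M * Real.sqrt t)) *
              ∑ s ∈ Finset.Icc 1 (t - 1), g s))) :
    ∑ t ∈ Finset.Icc 1 T, ℓ (yhat t) (y t) ≤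
      sInf {S : ℝ | ∃ c ∈ Set.Icc (0:ℝ) 1, S = ∑ t ∈ Finset.Icc 1 T, ℓ c (y t)}
        + 2 * M * Real.sqrt (T * Real.log 2) := by
  have hg : ∀ t ∈ Icc 1 T, |g t| ≤ M := fun t ht ↦
    abs_le.2 (hg_bdd t (mem_Icc.1 ht).1 (mem_Icc.1 ht).2)
  have hpredictions : ∑ t ∈ Icc 1 T, g t * yhat t =
      ∑ t ∈ Icc 1 T, g t * weight (√(log 2) / (M * √t)) (∑ s ∈ Icc 1 (t - 1), g s) :=
    sum_congr rfl fun t ht ↦ by rw [hyhat t (mem_Icc.1 ht).1 (mem_Icc.1 ht).2, weight]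
  have hregret : ∀ c ∈ Set.Icc (0 : ℝ) 1, ∑ t ∈ Icc 1 T, ℓ (yhat t) (y t) ≤
      ∑ t ∈ Icc 1 T, ℓ c (y t) + 2 * M * √(T * log 2) := fun c hc ↦ by
    have hlinear : ∑ t ∈ Icc 1 T, ℓ (yhat t) (y t) ≤
        ∑ t ∈ Icc 1 T, ℓ c (y t) + (∑ t ∈ Icc 1 T, g t * yhat t - c * ∑ t ∈ Icc 1 T, g t) := by
      rw [mul_sum, ← sum_sub_distrib, ← sum_add_distrib]
      refine sum_le_sum fun t ht ↦ ?_
      linarith [hg_subgrad t (mem_Icc.1 ht).1 (mem_Icc.1 ht).2 c hc]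
    linarith [sum_mul_weight_sqrt_le hT hM g hg hc]
  rw [← sub_le_iff_le_add]
  exact le_csInf ⟨_, 0, ⟨le_rfl, zero_le_one⟩, rfl⟩ fun _ ⟨c, hc, hS⟩ ↦
    hS ▸ sub_le_iff_le_add.2 (hregret c hc)

/-- Lemma 2: regret bound of the gradient-based exponentially weighted average forecaster
(EG) with the two constant experts `0` and `1`. Here `g t` is a subgradient at `yhat t` of
`x ↦ ℓ(x, y t)` on `[0,1]`, bounded by `M`, the learning rates are
`η t = √(log 2)/(M √t)`, and the predictions follow the exponential-weights formula. -/
theorem stmt_3 (T : ℕ) (hT : 1 ≤ T) (M : ℝ) (hM : 0 < M)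
    (ℓ : ℝ → ℝ → ℝ)
    (hℓ_val : ∀ x ∈ Set.Icc (0:ℝ) 1, ∀ y ∈ Set.Icc (0:ℝ) 1, ℓ x y ∈ Set.Icc (0:ℝ) 1)
    (hℓ_conv : ∀ y ∈ Set.Icc (0:ℝ) 1, ConvexOn ℝ (Set.Icc (0:ℝ) 1) (fun x => ℓ x y))
    (y : ℕ → ℝ) (hy : ∀ t, y t ∈ Set.Icc (0:ℝ) 1)
    (yhat : ℕ → ℝ) (g : ℕ → ℝ)
    -- `g t` is a subgradient at `yhat t`, bounded by `M` in absolute value: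
    (hg_bdd : ∀ t, 1 ≤ t → t ≤ T → g t ∈ Set.Icc (-M) M)
    (hg_subgrad : ∀ t, 1 ≤ t → t ≤ T → ∀ x ∈ Set.Icc (0:ℝ) 1,
      ℓ (yhat t) (y t) + g t * (x - yhat t) ≤ ℓ x (y t))
    -- the EG predictions:
    (hyhat : ∀ t, 1 ≤ t → t ≤ T →
      yhat t = Real.exp (-(Real.sqrt (Real.log 2) / (M * Real.sqrt t)) *
              ∑ s ∈ Finset.Icc 1 (t - 1), g s) /
            (1 + Real.exp (-(Real.sqrt (Real.log 2) / (M * Real.sqrt t)) *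
              ∑ s ∈ Finset.Icc 1 (t - 1), g s))) :
    ∑ t ∈ Finset.Icc 1 T, ℓ (yhat t) (y t) ≤
      sInf {S : ℝ | ∃ c ∈ Set.Icc (0:ℝ) 1, S = ∑ t ∈ Finset.Icc 1 T, ℓ c (y t)}
        + 2 * M * Real.sqrt (T * Real.log 2) :=
  stmt_3_general T hT M hM ℓ y yhat g hg_bdd hg_subgrad hyhat
end

section
/- For every real u with 0 ≤ u ≤ 1, one has 2^u·√(1 − 3u/4) ≤ √2; equivalently, 4^u·(1 − 3u/4) ≤ 2 for all u ∈ [0,1]. -/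
/-- For every real `u ∈ [0,1]`, `2^u * √(1 - 3u/4) ≤ √2`, and equivalently
`4^u * (1 - 3u/4) ≤ 2`. -/
theorem stmt_5 (u : ℝ) (hu0 : 0 ≤ u) (hu1 : u ≤ 1) :
    (2 : ℝ) ^ u * Real.sqrt (1 - 3 * u / 4) ≤ Real.sqrt 2 ∧
    (4 : ℝ) ^ u * (1 - 3 * u / 4) ≤ 2 := by
  have h4 : (4 : ℝ) ^ u ≤ 1 + 3 * u := by
    have hc := convexOn_exp.2 (Set.mem_univ (0 : ℝ)) (Set.mem_univ (Real.log 4))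
      (by linarith : (0:ℝ) ≤ 1 - u) hu0 (by ring)
    rw [Real.rpow_def_of_pos (by norm_num : (0:ℝ) < 4)]
    simp only [smul_eq_mul, mul_zero, zero_add, Real.exp_zero, mul_one,
      Real.exp_log (by norm_num : (0:ℝ) < 4)] at hc
    calc Real.exp (Real.log 4 * u) = Real.exp (u * Real.log 4) := by ring_nf
      _ ≤ (1 - u) * 1 + u * 4 := by simpa using hc
      _ = 1 + 3 * u := by ring
  have hpos : (0:ℝ) ≤ 1 - 3 * u / 4 := by linarith
  have h4pos : (0:ℝ) < (4:ℝ) ^ u := Real.rpow_pos_of_pos (by norm_num) u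
  have key : (4 : ℝ) ^ u * (1 - 3 * u / 4) ≤ 2 := by
    nlinarith [sq_nonneg (u - 1/2), mul_le_mul_of_nonneg_right h4 hpos]
  refine ⟨?_, key⟩
  have hsq : ((2:ℝ) ^ u) ^ 2 = (4:ℝ) ^ u := by
    rw [← Real.rpow_natCast ((2:ℝ)^u) 2, ← Real.rpow_mul (by norm_num)]
    norm_num
    rw [show (u * 2) = 2 * u by ring, Real.rpow_mul (by norm_num)]
    norm_num
  have h2nn : (0:ℝ) ≤ (2:ℝ) ^ u := (Real.rpow_pos_of_pos (by norm_num) u).le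
  calc (2:ℝ) ^ u * Real.sqrt (1 - 3 * u / 4)
      = Real.sqrt (((2:ℝ)^u)^2 * (1 - 3 * u / 4)) := by
        rw [Real.sqrt_mul (sq_nonneg _), Real.sqrt_sq h2nn]
    _ ≤ Real.sqrt 2 := Real.sqrt_le_sqrt (by rw [hsq]; exact key)
end

section
/- Let N ≥ 3 be an odd integer and let T be a full binary tree with N nodes (every node has either exactly two children or none). Let N^in = (N−1)/2 be its number of internal nodes. Then the average depth of the internal nodes satisfies (1/N^in)·∑_{h=0}^{∞} h·#{internal nodes of T of depth h} ≥ log₂((N−1)/8), where the depth of a node is its distance to the root. -/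
/-- A full binary tree: every node has either exactly two children or none. -/
inductive FullBinaryTree : Type
  | leaf : FullBinaryTree
  | node : FullBinaryTree → FullBinaryTree → FullBinaryTree

namespace FullBinaryTree

/-- Total number of nodes. -/
def numNodes : FullBinaryTree → ℕ
  | leaf => 1
  | node l r => 1 + l.numNodes + r.numNodes

/-- Number of internal nodes (nodes with two children) at depth `h`
(the depth of a node is its distance to the root). -/
def internalCount : FullBinaryTree → ℕ → ℕ
  | leaf, _ => 0
  | node _ _, 0 => 1
  | node l r, h + 1 => l.internalCount h + r.internalCount h

end FullBinaryTree

namespace FullBinaryTree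

def intern : FullBinaryTree → ℕ
  | leaf => 0
  | node l r => 1 + l.intern + r.intern

lemma numNodes_eq : ∀ t : FullBinaryTree, t.numNodes = 2 * t.intern + 1
  | leaf => rfl
  | node l r => by
      have hl := numNodes_eq l; have hr := numNodes_eq r
      simp only [numNodes, intern]; omega

lemma internalCount_eq_zero : ∀ (t : FullBinaryTree) (h : ℕ), t.numNodes ≤ h →
    t.internalCount h = 0
  | leaf, _, _ => rfl
  | node l r, 0, hh => by simp [numNodes] at hh
  | node l r, h + 1, hh => by
      have hl : l.numNodes ≤ h := by simp only [numNodes] at hh; omega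
      have hr : r.numNodes ≤ h := by simp only [numNodes] at hh; omega
      simp only [internalCount, internalCount_eq_zero l h hl,
        internalCount_eq_zero r h hr]

lemma sum_internalCount : ∀ (t : FullBinaryTree) (M : ℕ), t.numNodes ≤ M →
    ∑ h ∈ Finset.range M, t.internalCount h = t.intern
  | leaf, M, _ => by simp [internalCount, intern]
  | node l r, M, hM => by
      obtain ⟨M', rfl⟩ : ∃ M', M = M' + 1 := by
        cases M with
        | zero => simp [numNodes] at hM
        | succ M' => exact ⟨M', rfl⟩
      have hl : l.numNodes ≤ M' := by simp only [numNodes] at hM; omega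
      have hr : r.numNodes ≤ M' := by simp only [numNodes] at hM; omega
      rw [Finset.sum_range_succ']
      simp only [internalCount, Finset.sum_add_distrib,
        sum_internalCount l M' hl, sum_internalCount r M' hr, intern]
      omega

lemma conv_ineq (u v : ℝ) (hu : 0 < u) (hv : 0 < v) :
    (u + v) * Real.log (u + v) ≤ u * Real.log u + v * Real.log v
      + (u + v) * Real.log 2 := by
  set s : ℝ := (u + v) / 2 with hs
  have hs0 : 0 < s := by positivity
  have h1 : Real.log s - Real.log u ≤ s / u - 1 := by
    rw [← Real.log_div (ne_of_gt hs0) (ne_of_gt hu)]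
    exact Real.log_le_sub_one_of_pos (by positivity)
  have h2 : Real.log s - Real.log v ≤ s / v - 1 := by
    rw [← Real.log_div (ne_of_gt hs0) (ne_of_gt hv)]
    exact Real.log_le_sub_one_of_pos (by positivity)
  have hu1 : u * (Real.log s - Real.log u) ≤ s - u := by
    have := mul_le_mul_of_nonneg_left h1 hu.le
    have hc : u * (s / u - 1) = s - u := by field_simp
    linarith [hc ▸ this]
  have hv1 : v * (Real.log s - Real.log v) ≤ s - v := by
    have := mul_le_mul_of_nonneg_left h2 hv.le
    have hc : v * (s / v - 1) = s - v := by field_simp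
    linarith [hc ▸ this]
  have hlog : Real.log (u + v) = Real.log s + Real.log 2 := by
    rw [hs, Real.log_div (by positivity) (by norm_num)]
    ring
  rw [hlog]
  nlinarith [hu1, hv1]

lemma key : ∀ (t : FullBinaryTree) (M : ℕ), t.numNodes ≤ M →
    ((t.intern : ℝ) + 1) * Real.log ((t.intern : ℝ) + 1)
      - 2 * (t.intern : ℝ) * Real.log 2
    ≤ (∑ h ∈ Finset.range M, (h : ℝ) * (t.internalCount h : ℝ)) * Real.log 2
  | leaf, M, _ => by simp [internalCount, intern]
  | node l r, M, hM => by
      obtain ⟨M', rfl⟩ : ∃ M', M = M' + 1 := by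
        cases M with
        | zero => simp [numNodes] at hM
        | succ M' => exact ⟨M', rfl⟩
      have hl : l.numNodes ≤ M' := by simp only [numNodes] at hM; omega
      have hr : r.numNodes ≤ M' := by simp only [numNodes] at hM; omega
      have ihl := key l M' hl
      have ihr := key r M' hr
      -- compute the sum
      have hsum : (∑ h ∈ Finset.range (M' + 1), (h : ℝ) * ((node l r).internalCount h : ℝ))
          = (∑ h ∈ Finset.range M', (h : ℝ) * (l.internalCount h : ℝ))
            + (∑ h ∈ Finset.range M', (h : ℝ) * (r.internalCount h : ℝ))
            + (l.intern : ℝ) + (r.intern : ℝ) := by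
        rw [Finset.sum_range_succ']
        have : ∀ h : ℕ, ((h + 1 : ℕ) : ℝ) * (((node l r).internalCount (h + 1) : ℕ) : ℝ)
            = (h : ℝ) * (l.internalCount h : ℝ) + (h : ℝ) * (r.internalCount h : ℝ)
              + (l.internalCount h : ℝ) + (r.internalCount h : ℝ) := by
          intro h
          simp only [internalCount]
          push_cast
          ring
        rw [Finset.sum_congr rfl (fun h _ => this h)]
        have hsl : (∑ h ∈ Finset.range M', (l.internalCount h : ℝ)) = (l.intern : ℝ) := by
          rw [← Nat.cast_sum, sum_internalCount l M' hl]
        have hsr : (∑ h ∈ Finset.range M', (r.internalCount h : ℝ)) = (r.intern : ℝ) := by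
          rw [← Nat.cast_sum, sum_internalCount r M' hr]
        simp only [Finset.sum_add_distrib, hsl, hsr]
        push_cast
        ring
      rw [hsum]
      set u : ℝ := (l.intern : ℝ) + 1 with hu
      set v : ℝ := (r.intern : ℝ) + 1 with hv
      have hu0 : 0 < u := by positivity
      have hv0 : 0 < v := by positivity
      have hconv := conv_ineq u v hu0 hv0
      have hcast : (((node l r).intern : ℝ)) = u + v - 1 := by
        simp only [intern, hu, hv]; push_cast; ring
      rw [hcast]
      have h2 : (0:ℝ) < Real.log 2 := Real.log_pos (by norm_num)
      have : u + v - 1 + 1 = u + v := by ring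
      rw [this]
      nlinarith [ihl, ihr, hconv]


end FullBinaryTree

/-- Second statement of Lemma 8: for a full binary tree with `N ≥ 3` nodes (`N` odd),
hence `N^in = (N-1)/2` internal nodes, the average depth of the internal nodes is at
least `log₂((N-1)/8)`. -/
theorem stmt_7 (N : ℕ) (hN : 3 ≤ N) (hodd : Odd N)
    (t : FullBinaryTree) (ht : t.numNodes = N) :
    Real.logb 2 (((N : ℝ) - 1) / 8) ≤
      (1 / (((N : ℝ) - 1) / 2)) * ∑' h : ℕ, (h : ℝ) * (t.internalCount h : ℝ) := by
  classical
  have htsum : (∑' h : ℕ, (h : ℝ) * (t.internalCount h : ℝ))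
      = ∑ h ∈ Finset.range t.numNodes, (h : ℝ) * (t.internalCount h : ℝ) := by
    refine tsum_eq_sum ?_
    intro h hh
    rw [FullBinaryTree.internalCount_eq_zero t h
      (Nat.le_of_not_lt (fun hc => hh (Finset.mem_range.mpr hc)))]
    simp
  rw [htsum]
  set S : ℝ := ∑ h ∈ Finset.range t.numNodes, (h : ℝ) * (t.internalCount h : ℝ) with hS
  have hkey := FullBinaryTree.key t t.numNodes le_rfl
  set n : ℕ := t.intern with hn
  have hNn : N = 2 * n + 1 := by rw [← ht, t.numNodes_eq]
  have hn1 : 1 ≤ n := by omega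
  have hnR : (1:ℝ) ≤ (n : ℝ) := by exact_mod_cast hn1
  have hNR : (N : ℝ) - 1 = 2 * (n : ℝ) := by rw [hNn]; push_cast; ring
  rw [hNR]
  have h2 : (0:ℝ) < Real.log 2 := Real.log_pos (by norm_num)
  have hn0 : (0:ℝ) < (n:ℝ) := by linarith
  -- reduce goal to: n * log n - 2 n log 2 ≤ S * log 2
  have hmono : (n : ℝ) * Real.log (n : ℝ) ≤ ((n : ℝ) + 1) * Real.log ((n : ℝ) + 1) := by
    have hlog : Real.log (n : ℝ) ≤ Real.log ((n : ℝ) + 1) :=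
      Real.log_le_log hn0 (by linarith)
    have hlogn : 0 ≤ Real.log (n : ℝ) := Real.log_nonneg hnR
    nlinarith
  have hmain : (n : ℝ) * Real.log (n : ℝ) - 2 * (n : ℝ) * Real.log 2 ≤ S * Real.log 2 := by
    calc (n : ℝ) * Real.log (n : ℝ) - 2 * (n : ℝ) * Real.log 2
        ≤ ((n : ℝ) + 1) * Real.log ((n : ℝ) + 1) - 2 * (n : ℝ) * Real.log 2 := by linarith
      _ ≤ S * Real.log 2 := hkey
  have hlog4 : Real.log (2 * (n : ℝ) / 8) = Real.log (n : ℝ) - 2 * Real.log 2 := by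
    have : 2 * (n : ℝ) / 8 = (n : ℝ) / 4 := by ring
    rw [this, Real.log_div (ne_of_gt hn0) (by norm_num)]
    have : (4 : ℝ) = 2 ^ 2 := by norm_num
    rw [this, Real.log_pow]
    push_cast; ring
  rw [Real.logb, hlog4, div_le_iff₀ h2]
  have hrhs : (1 / (2 * (n : ℝ) / 2)) * S * Real.log 2 = S * Real.log 2 / (n : ℝ) := by
    field_simp
  rw [hrhs, le_div_iff₀ hn0]
  nlinarith [hmain]
end

section
/- Consider the following exponentially weighted average scheme with entering experts. Let t_1 = 2 < t_2 < t_3 < … be a strictly increasing sequence of integers (starting times), and for t ≥ 2 set D_t = max{d ≥ 1 : t_d ≤ t}. Let (η_t)_{t≥1} be a positive nonincreasing sequence. For each d and each t ≥ t_d let f_{d,t} ∈ [0,1] be the prediction of expert d, and let y_t ∈ [0,1]. Define weights by: p_{1,t_1} = 1; for each t ≥ t_1 and d ≤ D_t, p_{d,t+1} = (D_t/D_{t+1}) · p_{d,t}^{η_{t+1}/η_t} · exp(−η_{t+1}·ℓ(f_{d,t}, y_t)) / ∑_{k=1}^{D_t} p_{k,t}^{η_{t+1}/η_t} · exp(−η_{t+1}·ℓ(f_{k,t},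 y_t)); and if D_{t+1} = D_t + 1, set p_{D_{t+1},t+1} = 1/D_{t+1}. Let ŷ_t = ∑_{d=1}^{D_t} p_{d,t}·f_{d,t}. Then for every T ≥ t_1 and every d with t_d ≤ T: ∑_{t=t_d}^{T} ( ℓ(ŷ_t, y_t) − ℓ(f_{d,t}, y_t) ) ≤ (1/η_{T+1})·log(D_{T+1}) + (1/8)·∑_{t=t_d}^{T} η_t. -/
/-! Fix an expert `d` and track the potential `Φ t = (1/η_t) log (D_t p_{d,t})`. It vanishes
when `d` enters (with weight `1/D`), and since the weights stay a probability vector it is at most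
`(1/η_{T+1}) log D_{T+1}` at the end. In each round the regret against `d` is at most
`η_t/8 + Φ(t+1) - Φ(t)`: Jensen's inequality replaces the loss of the mixture by the mixture of
the losses, Hoeffding's lemma bounds `log ∑ p e^{-η_t ℓ}` by that mixed loss, and concavity of
`x ↦ x^α` for `α = η_{t+1}/η_t ≤ 1` pays for the change of learning rate. The sum telescopes. -/

open Finset

open MeasureTheory ProbabilityTheory in
theorem Real.log_sum_mul_exp_le {ι : Type*} (s : Finset ι) {w x : ι → ℝ} {a b : ℝ}
    (hw : ∀ i ∈ s, 0 ≤ w i) (hw1 : ∑ i ∈ s, w i = 1) (hx : ∀ i ∈ s, x i ∈ Set.Icc a b)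
    (t : ℝ) :
    Real.log (∑ i ∈ s, w i * Real.exp (t * x i)) ≤
      t * ∑ i ∈ s, w i * x i + (b - a) ^ 2 * t ^ 2 / 8 := by
  -- Hoeffding's lemma for the probability measure `∑ i ∈ s, w i • δ_i`.
  let _ : MeasurableSpace ι := ⊤
  set μ : Measure ι := ∑ i ∈ s, ENNReal.ofReal (w i) • Measure.dirac i
  have hint (g : ι → ℝ) : ∫ j, g j ∂μ = ∑ i ∈ s, w i * g i := by
    rw [integral_finsetSum_measure fun i _ => (integrable_dirac (by simp)).smul_measure (by simp)]
    refine sum_congr rfl fun i hi => ?_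
    rw [integral_smul_measure, integral_dirac, ENNReal.toReal_ofReal (hw i hi), smul_eq_mul]
  have : IsProbabilityMeasure μ := ⟨by simp [μ, ← ENNReal.ofReal_sum_of_nonneg hw, hw1]⟩
  have hae : ∀ᵐ j ∂μ, x j ∈ Set.Icc a b := by
    rw [ae_iff, Measure.coe_finsetSum, Finset.sum_apply]
    exact sum_eq_zero fun i hi => by simp [(hx i hi).1, (hx i hi).2]
  have hmgf := (hasSubgaussianMGF_of_mem_Icc measurable_from_top.aemeasurable hae).mgf_le t
  have hpos := mgf_pos (t := t) (integrable_exp_mul_of_mem_Icc measurable_from_top.aemeasurable hae)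
  simp only [mgf, hint, mul_sub, Real.exp_sub, ← mul_div_assoc, ← sum_div] at hmgf hpos
  rw [div_le_iff₀ (Real.exp_pos _)] at hmgf
  rw [Real.log_le_iff_le_exp hpos, add_comm, Real.exp_add]
  refine hmgf.trans_eq (congrArg (· * _) (congrArg Real.exp ?_))
  push_cast
  rw [Real.norm_eq_abs, div_pow, sq_abs]
  ring

theorem Real.log_sum_rpow_le {ι : Type*} {s : Finset ι} (hs : s.Nonempty) {v : ι → ℝ}
    (hv : ∀ i ∈ s, 0 < v i) {α : ℝ} (hα₀ : 0 ≤ α) (hα₁ : α ≤ 1) :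
    Real.log (∑ i ∈ s, v i ^ α) ≤ (1 - α) * Real.log #s + α * Real.log (∑ i ∈ s, v i) := by
  have hN : (0 : ℝ) < #s := by exact_mod_cast hs.card_pos
  have hjensen := (Real.concaveOn_rpow hα₀ hα₁).le_map_sum (t := s) (w := fun _ => (#s : ℝ)⁻¹)
    (p := v) (fun _ _ => by positivity) (by simp [hN.ne']) fun i hi => (hv i hi).le
  simp only [smul_eq_mul, ← mul_sum] at hjensen
  have hsum : 0 < ∑ i ∈ s, v i := sum_pos hv hs
  have hsum_rpow : 0 < ∑ i ∈ s, v i ^ α := sum_pos (fun i hi => Real.rpow_pos_of_pos (hv i hi) α) hs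
  have hlog := Real.log_le_log (by positivity) hjensen
  rw [Real.log_mul (by positivity) hsum_rpow.ne', Real.log_rpow (by positivity),
    Real.log_mul (by positivity) hsum.ne', Real.log_inv] at hlog
  linarith

noncomputable def expWeightsUpdate {ι : Type*} (s : Finset ι) (w l : ι → ℝ) (η₁ η₂ : ℝ) (e : ι) :
    ℝ :=
  w e ^ (η₂ / η₁) * Real.exp (-η₂ * l e) / ∑ k ∈ s, w k ^ (η₂ / η₁) * Real.exp (-η₂ * l k)

section expWeightsUpdate

variable {ι : Type*} {s : Finset ι} {w : ι → ℝ}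

theorem expWeightsUpdate_pos (l : ι → ℝ) (η₁ η₂ : ℝ) (hw : ∀ k ∈ s, 0 < w k) {e : ι}
    (he : e ∈ s) : 0 < expWeightsUpdate s w l η₁ η₂ e := by
  have := hw e he
  exact div_pos (by positivity) (sum_pos (fun k hk => by have := hw k hk; positivity) ⟨e, he⟩)

theorem sum_expWeightsUpdate (l : ι → ℝ) (η₁ η₂ : ℝ) (hw : ∀ k ∈ s, 0 < w k) (hs : s.Nonempty) :
    ∑ e ∈ s, expWeightsUpdate s w l η₁ η₂ e = 1 := by
  unfold expWeightsUpdate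
  rw [← sum_div, div_self (sum_pos (fun k hk => by have := hw k hk; positivity) hs).ne']

theorem sum_mul_sub_le_of_expWeightsUpdate {l : ι → ℝ} (hw : ∀ k ∈ s, 0 < w k)
    (hw1 : ∑ k ∈ s, w k = 1) (hl : ∀ k ∈ s, l k ∈ Set.Icc (0 : ℝ) 1) {η₁ η₂ : ℝ} (hη₂ : 0 < η₂)
    (hη₂₁ : η₂ ≤ η₁) {e : ι} (he : e ∈ s) :
    ∑ k ∈ s, w k * l k - l e ≤ η₁ / 8 + 1 / η₂ * Real.log (#s * expWeightsUpdate s w l η₁ η₂ e)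
      - 1 / η₁ * Real.log (#s * w e) := by
  have hη₁ : 0 < η₁ := hη₂.trans_le hη₂₁
  have hs : s.Nonempty := ⟨e, he⟩
  have hN : (0 : ℝ) < #s := by exact_mod_cast hs.card_pos
  have hwe := hw e he
  set α := η₂ / η₁ with hα
  set S := ∑ k ∈ s, w k * Real.exp (-η₁ * l k)
  set Z := ∑ k ∈ s, w k ^ α * Real.exp (-η₂ * l k)
  have hZ : Z = ∑ k ∈ s, (w k * Real.exp (-η₁ * l k)) ^ α := by
    refine sum_congr rfl fun k hk => ?_
    rw [Real.mul_rpow (hw k hk).le (Real.exp_pos _).le, ← Real.exp_mul, hα]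
    field_simp
  have hZpos : 0 < Z := by
    rw [hZ]
    exact sum_pos (fun k hk => by have := hw k hk; positivity) hs
  have hhoeffding : 1 / η₁ * Real.log S ≤ -∑ k ∈ s, w k * l k + η₁ / 8 := by
    have := Real.log_sum_mul_exp_le s (fun k hk => (hw k hk).le) hw1 hl (-η₁)
    rw [sub_zero, one_pow, one_mul, neg_sq] at this
    have := mul_le_mul_of_nonneg_left this (one_div_pos.2 hη₁).le
    rwa [show 1 / η₁ * (-η₁ * ∑ k ∈ s, w k * l k + η₁ ^ 2 / 8) = -∑ k ∈ s, w k * l k + η₁ / 8 by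
      field_simp] at this
  have hpower : 1 / η₂ * Real.log Z ≤ 1 / η₂ * ((1 - α) * Real.log #s + α * Real.log S) := by
    rw [hZ]
    gcongr
    exact Real.log_sum_rpow_le hs (fun k hk => by have := hw k hk; positivity) (by positivity)
      ((div_le_one hη₁).2 hη₂₁)
  have hlog_update : Real.log (#s * expWeightsUpdate s w l η₁ η₂ e) =
      Real.log #s + α * Real.log (w e) - η₂ * l e - Real.log Z := by
    rw [expWeightsUpdate, Real.log_mul hN.ne' (by positivity), Real.log_div (by positivity)
      hZpos.ne', Real.log_mul (by positivity) (by positivity), Real.log_rpow hwe, Real.log_exp]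
    ring
  have hα₂ : 1 / η₂ * α = 1 / η₁ := by rw [hα]; field_simp
  have hη₂' : 1 / η₂ * η₂ = 1 := by field_simp
  rw [hlog_update, Real.log_mul hN.ne' hwe.ne']
  linear_combination hpower + hhoeffding + (Real.log S - Real.log (w e) - Real.log #s) * hα₂
    + l e * hη₂'

theorem loss_sub_le_of_expWeightsUpdate {g : ι → ℝ} {ℓ : ℝ → ℝ → ℝ} {y : ℝ}
    (hℓ_val : ∀ x ∈ Set.Icc (0 : ℝ) 1, ℓ x y ∈ Set.Icc (0 : ℝ) 1)
    (hℓ_conv : ConvexOn ℝ (Set.Icc (0 : ℝ) 1) (ℓ · y)) (hg : ∀ k ∈ s, g k ∈ Set.Icc (0 : ℝ) 1)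
    (hw : ∀ k ∈ s, 0 < w k) (hw1 : ∑ k ∈ s, w k = 1) {η₁ η₂ : ℝ} (hη₂ : 0 < η₂)
    (hη₂₁ : η₂ ≤ η₁) {e : ι} (he : e ∈ s) {N' w'e : ℝ} (hN' : 0 < N')
    (hw'e : w'e = #s / N' * expWeightsUpdate s w (fun k => ℓ (g k) y) η₁ η₂ e) :
    ℓ (∑ k ∈ s, w k * g k) y - ℓ (g e) y ≤
      η₁ / 8 + (1 / η₂ * Real.log (N' * w'e) - 1 / η₁ * Real.log (#s * w e)) := by
  have hjensen : ℓ (∑ k ∈ s, w k * g k) y ≤ ∑ k ∈ s, w k * ℓ (g k) y := by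
    simpa only [smul_eq_mul] using hℓ_conv.map_sum_le (fun k hk => (hw k hk).le) hw1 hg
  have hN'w'e : N' * w'e = #s * expWeightsUpdate s w (fun k => ℓ (g k) y) η₁ η₂ e := by
    rw [hw'e]
    field_simp
  have := sum_mul_sub_le_of_expWeightsUpdate hw hw1 (fun k hk => hℓ_val _ (hg k hk)) hη₂ hη₂₁ he
  rw [hN'w'e]
  linarith

end expWeightsUpdate

theorem expWeights_pos_and_sum_eq_one {t₀ : ℕ} {D : ℕ → ℕ} {p l : ℕ → ℕ → ℝ} {η : ℕ → ℝ}
    (hD₀ : D t₀ = 1) (hD : ∀ t, t₀ ≤ t → D (t + 1) = D t ∨ D (t + 1) = D t + 1)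
    (hp_init : p 1 t₀ = 1)
    (hp_update : ∀ t, t₀ ≤ t → ∀ d ∈ Icc 1 (D t), p d (t + 1) =
      D t / D (t + 1) * expWeightsUpdate (Icc 1 (D t)) (p · t) (l · t) (η t) (η (t + 1)) d)
    (hp_enter : ∀ t, t₀ ≤ t → D (t + 1) = D t + 1 → p (D (t + 1)) (t + 1) = 1 / D (t + 1))
    {t : ℕ} (ht : t₀ ≤ t) :
    (∀ k ∈ Icc 1 (D t), 0 < p k t) ∧ ∑ k ∈ Icc 1 (D t), p k t = 1 := by
  induction t, ht using Nat.le_induction with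
  | base => simp [hD₀, hp_init]
  | succ t ht ih =>
    obtain ⟨hpos, hsum⟩ := ih
    have hs : (Icc 1 (D t)).Nonempty := nonempty_of_sum_ne_zero (by rw [hsum]; exact one_ne_zero)
    have hDt : (0 : ℝ) < D t := Nat.cast_pos.2 (nonempty_Icc.1 hs)
    have hpos' : ∀ k ∈ Icc 1 (D t), 0 < p k (t + 1) := fun k hk => by
      rw [hp_update t ht k hk]
      have := expWeightsUpdate_pos (l · t) (η t) (η (t + 1)) hpos hk
      rcases hD t ht with h | h <;> rw [h] <;> positivity
    have hsum' : ∑ k ∈ Icc 1 (D t), p k (t + 1) = D t / D (t + 1) := by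
      rw [sum_congr rfl (hp_update t ht), ← mul_sum, sum_expWeightsUpdate _ _ _ hpos hs, mul_one]
    rcases hD t ht with h | h
    · rw [h] at hsum' ⊢
      exact ⟨hpos', hsum'.trans (div_self hDt.ne')⟩
    · have hnew := hp_enter t ht h
      rw [h] at hnew hsum' ⊢
      refine ⟨fun k hk => ?_, ?_⟩
      · rcases (mem_Icc.1 hk).2.lt_or_eq with hk' | hk'
        · exact hpos' k (mem_Icc.2 ⟨(mem_Icc.1 hk).1, by omega⟩)
        · rw [hk', hnew]
          positivity
      · rw [sum_Icc_succ_top (by omega), hsum', hnew]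
        push_cast
        field_simp

theorem sum_le_of_le_add_sub {a T : ℕ} (haT : a ≤ T) {r c Φ : ℕ → ℝ} {B : ℝ}
    (hstep : ∀ t ∈ Icc a T, r t ≤ c t + (Φ (t + 1) - Φ t)) (ha : Φ a = 0) (hT : Φ (T + 1) ≤ B) :
    ∑ t ∈ Icc a T, r t ≤ B + ∑ t ∈ Icc a T, c t := by
  have := sum_le_sum hstep
  rw [sum_add_distrib, sum_Icc_sub haT, ha] at this
  linarith

theorem strictMonoOn_Ici_of_lt_add_one {α : Type*} [Preorder α] {f : ℕ → α} {a : ℕ}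
    (hf : ∀ n, a ≤ n → f n < f (n + 1)) : StrictMonoOn f (Set.Ici a) :=
  strictMonoOn_Ici_of_pred_lt fun m hm => by
    simpa [Nat.sub_add_cancel (Nat.one_le_of_lt hm)] using hf (m - 1) (by omega)

def IsEnteredCount (td D : ℕ → ℕ) : Prop :=
  ∀ t, 2 ≤ t → (1 ≤ D t ∧ td (D t) ≤ t ∧ ∀ d, 1 ≤ d → td d ≤ t → d ≤ D t)

section IsEnteredCount

variable {td D : ℕ → ℕ}

theorem IsEnteredCount.le_iff (hmono : StrictMonoOn td (Set.Ici 1)) (hD : IsEnteredCount td D)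
    {t d : ℕ} (ht : 2 ≤ t) (hd : 1 ≤ d) : d ≤ D t ↔ td d ≤ t := by
  obtain ⟨-, hDt, hmax⟩ := hD t ht
  exact ⟨fun h => (hmono.monotoneOn hd (le_trans hd h) h).trans hDt, hmax d hd⟩

theorem IsEnteredCount.succ_eq_or (hmono : StrictMonoOn td (Set.Ici 1))
    (hD : IsEnteredCount td D) {t : ℕ} (ht : 2 ≤ t) : D (t + 1) = D t ∨ D (t + 1) = D t + 1 := by
  obtain ⟨hD1, hDt, -⟩ := hD t ht
  have hle : D t ≤ D (t + 1) := (hD.le_iff hmono (by omega) hD1).2 (by omega)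
  have hlt : ¬ D t + 2 ≤ D (t + 1) := fun h => by
    have h₁ := (hD.le_iff hmono (by omega) (by omega)).1 h
    have h₂ : td (D t + 1) < td (D t + 2) := hmono (by simp) (by simp) (by omega)
    have h₃ := (hD.le_iff hmono ht (d := D t + 1) (by omega)).2 (by omega)
    omega
  omega

theorem IsEnteredCount.apply_start (hmono : StrictMonoOn td (Set.Ici 1)) (htd1 : td 1 = 2)
    (hD : IsEnteredCount td D) {d : ℕ} (hd : 1 ≤ d) : D (td d) = d := by
  have h2 : 2 ≤ td d := htd1 ▸ hmono.monotoneOn Set.self_mem_Ici hd hd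
  have hle := (hD.le_iff hmono h2 hd).2 le_rfl
  have hge : ¬ d < D (td d) := fun h =>
    (hmono hd (by simp; omega) h).not_ge (hD (td d) h2).2.1
  omega

theorem IsEnteredCount.exists_succ_eq_start (hmono : StrictMonoOn td (Set.Ici 1))
    (htd1 : td 1 = 2) (hD : IsEnteredCount td D) {d : ℕ} (hd : 2 ≤ d) :
    ∃ t, 2 ≤ t ∧ t + 1 = td d ∧ D (t + 1) = D t + 1 := by
  have h₁ : td 1 < td d := hmono Set.self_mem_Ici (by simp; omega) (by omega)
  have h₂ : td (d - 1) < td d := hmono (by simp; omega) (by simp; omega) (by omega)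
  have hsucc : td d - 1 + 1 = td d := by omega
  have hlo := (hD.le_iff hmono (t := td d - 1) (d := d - 1) (by omega) (by omega)).2 (by omega)
  have hhi : ¬ d ≤ D (td d - 1) := fun h => by
    have := (hD.le_iff hmono (by omega) (by omega)).1 h
    omega
  refine ⟨td d - 1, by omega, hsucc, ?_⟩
  rw [hsucc, hD.apply_start hmono htd1 (by omega)]
  omega

theorem IsEnteredCount.weight_start {p : ℕ → ℕ → ℝ} (hmono : StrictMonoOn td (Set.Ici 1))
    (htd1 : td 1 = 2) (hD : IsEnteredCount td D) (hp_init : p 1 2 = 1)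
    (hp_enter : ∀ t, 2 ≤ t → D (t + 1) = D t + 1 → p (D (t + 1)) (t + 1) = 1 / D (t + 1))
    {d : ℕ} (hd : 1 ≤ d) : p d (td d) = 1 / d := by
  rcases hd.eq_or_lt with rfl | hd₂
  · rw [htd1, hp_init]
    norm_num
  · obtain ⟨t, ht₂, hsucc, henter⟩ := hD.exists_succ_eq_start hmono htd1 hd₂
    have := hp_enter t ht₂ henter
    rwa [hsucc, hD.apply_start hmono htd1 hd] at this

end IsEnteredCount

theorem stmt_10_general
    (ℓ : ℝ → ℝ → ℝ)
    (hℓ_val : ∀ x ∈ Set.Icc (0:ℝ) 1, ∀ y ∈ Set.Icc (0:ℝ) 1, ℓ x y ∈ Set.Icc (0:ℝ) 1)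
    (hℓ_conv : ∀ y ∈ Set.Icc (0:ℝ) 1, ConvexOn ℝ (Set.Icc (0:ℝ) 1) (fun x => ℓ x y))
    -- the starting times `t_1 = 2 < t_2 < t_3 < …`:
    (td : ℕ → ℕ) (htd1 : td 1 = 2) (htd_mono : ∀ d, 1 ≤ d → td d < td (d + 1))
    -- `D t = max {d ≥ 1 : t_d ≤ t}` for `t ≥ t_1 = 2`:
    (D : ℕ → ℕ)
    (hD : ∀ t, 2 ≤ t → (1 ≤ D t ∧ td (D t) ≤ t ∧ ∀ d, 1 ≤ d → td d ≤ t → d ≤ D t))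
    -- positive nonincreasing learning rates:
    (η : ℕ → ℝ) (hη_pos : ∀ t, 1 ≤ t → 0 < η t) (hη_mono : ∀ t, 1 ≤ t → η (t + 1) ≤ η t)
    -- the experts' predictions and the observations, all in `[0,1]`:
    (f : ℕ → ℕ → ℝ) (hf : ∀ d t, f d t ∈ Set.Icc (0:ℝ) 1)
    (y : ℕ → ℝ) (hy : ∀ t, y t ∈ Set.Icc (0:ℝ) 1)
    -- the weights:
    (p : ℕ → ℕ → ℝ)
    (hp_init : p 1 2 = 1)
    (hp_update : ∀ t, 2 ≤ t → ∀ d, 1 ≤ d → d ≤ D t →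
      p d (t + 1) = ((D t : ℝ) / (D (t + 1) : ℝ)) *
        (p d t ^ (η (t + 1) / η t) * Real.exp (-(η (t + 1)) * ℓ (f d t) (y t))) /
        (∑ k ∈ Finset.Icc 1 (D t),
          p k t ^ (η (t + 1) / η t) * Real.exp (-(η (t + 1)) * ℓ (f k t) (y t))))
    (hp_enter : ∀ t, 2 ≤ t → D (t + 1) = D t + 1 →
      p (D (t + 1)) (t + 1) = 1 / (D (t + 1) : ℝ)) :
    ∀ T, 2 ≤ T → ∀ d, 1 ≤ d → td d ≤ T →
      ∑ t ∈ Finset.Icc (td d) T,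
          (ℓ (∑ k ∈ Finset.Icc 1 (D t), p k t * f k t) (y t) - ℓ (f d t) (y t))
        ≤ (1 / η (T + 1)) * Real.log (D (T + 1))
          + (1 / 8) * ∑ t ∈ Finset.Icc (td d) T, η t := by
  intro T hT d hd hdT
  have hmono : StrictMonoOn td (Set.Ici 1) := strictMonoOn_Ici_of_lt_add_one htd_mono
  have hstart : 2 ≤ td d := htd1 ▸ hmono.monotoneOn Set.self_mem_Ici hd hd
  have hupdate (t : ℕ) (ht : 2 ≤ t) (k : ℕ) (hk : k ∈ Icc 1 (D t)) : p k (t + 1) = D t / D (t + 1) *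
      expWeightsUpdate (Icc 1 (D t)) (p · t) (fun j => ℓ (f j t) (y t)) (η t) (η (t + 1)) k := by
    rw [hp_update t ht k (mem_Icc.1 hk).1 (mem_Icc.1 hk).2, expWeightsUpdate, mul_div_assoc]
  have hweights {t : ℕ} (ht : 2 ≤ t) := expWeights_pos_and_sum_eq_one
    (htd1 ▸ IsEnteredCount.apply_start hmono htd1 hD le_rfl)
    (fun t ht => IsEnteredCount.succ_eq_or hmono hD ht) hp_init hupdate hp_enter ht
  have hactive {t : ℕ} (ht : td d ≤ t) : d ∈ Icc 1 (D t) :=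
    mem_Icc.2 ⟨hd, (IsEnteredCount.le_iff hmono hD (hstart.trans ht) hd).2 ht⟩
  rw [mul_sum]
  refine sum_le_of_le_add_sub hdT (Φ := fun t => 1 / η t * Real.log (D t * p d t)) ?_ ?_ ?_
  · intro t ht
    have ht₂ : 2 ≤ t := hstart.trans (mem_Icc.1 ht).1
    have hcard : #(Icc 1 (D t)) = D t := by simp
    have := loss_sub_le_of_expWeightsUpdate (hℓ_val · · (y t) (hy t)) (hℓ_conv _ (hy t))
      (fun k _ => hf k t) (hweights ht₂).1 (hweights ht₂).2 (hη_pos (t + 1) (by omega))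
      (hη_mono t (by omega)) (hactive (mem_Icc.1 ht).1)
      (N' := D (t + 1)) (w'e := p d (t + 1)) (by exact_mod_cast (hD (t + 1) (by omega)).1)
      (by rw [hcard]; exact hupdate t ht₂ d (hactive (mem_Icc.1 ht).1))
    rw [hcard] at this
    linarith
  · have hd₀ : (d : ℝ) ≠ 0 := by positivity
    simp [hd₀, IsEnteredCount.apply_start hmono htd1 hD hd,
      IsEnteredCount.weight_start hmono htd1 hD hp_init hp_enter hd]
  · obtain ⟨hpos, hsum⟩ := hweights (t := T + 1) (by omega)
    have hmem := hactive (t := T + 1) (by omega)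
    have hD₀ : (0 : ℝ) < D (T + 1) := by exact_mod_cast (hD (T + 1) (by omega)).1
    have := hη_pos (T + 1) (by omega)
    gcongr
    · exact mul_pos hD₀ (hpos d hmem)
    · exact mul_le_of_le_one_right hD₀.le (hsum ▸ single_le_sum (fun k hk => (hpos k hk).le) hmem)

/-- First statement of Lemma 6: regret bound of the exponentially weighted average
forecaster with entering experts. Experts `d = 1, 2, …` enter at strictly increasing
starting times `t_1 = 2 < t_2 < …`; `D t` is the number of active experts at time `t`;
the weights follow the time-varying exponential update with nonincreasing positive
learning rates `η t`, a newly entering expert receiving weight `1/D_{t+1}`; the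
prediction is the weighted average of the active experts' predictions. Then for every
`T ≥ t_1` and every expert `d` active by time `T`, the regret with respect to expert `d`
over `t = t_d, …, T` is at most `(1/η_{T+1}) log D_{T+1} + (1/8) ∑_{t=t_d}^T η_t`. -/
theorem stmt_10 (M : ℝ) (hM : 0 ≤ M)
    (ℓ : ℝ → ℝ → ℝ)
    (hℓ_val : ∀ x ∈ Set.Icc (0:ℝ) 1, ∀ y ∈ Set.Icc (0:ℝ) 1, ℓ x y ∈ Set.Icc (0:ℝ) 1)
    (hℓ_conv : ∀ y ∈ Set.Icc (0:ℝ) 1, ConvexOn ℝ (Set.Icc (0:ℝ) 1) (fun x => ℓ x y))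
    (hℓ_lip : ∀ y ∈ Set.Icc (0:ℝ) 1,
      LipschitzOnWith M.toNNReal (fun x => ℓ x y) (Set.Icc (0:ℝ) 1))
    -- the starting times `t_1 = 2 < t_2 < t_3 < …`:
    (td : ℕ → ℕ) (htd1 : td 1 = 2) (htd_mono : ∀ d, 1 ≤ d → td d < td (d + 1))
    -- `D t = max {d ≥ 1 : t_d ≤ t}` for `t ≥ t_1 = 2`:
    (D : ℕ → ℕ)
    (hD : ∀ t, 2 ≤ t → (1 ≤ D t ∧ td (D t) ≤ t ∧ ∀ d, 1 ≤ d → td d ≤ t → d ≤ D t))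
    -- positive nonincreasing learning rates:
    (η : ℕ → ℝ) (hη_pos : ∀ t, 1 ≤ t → 0 < η t) (hη_mono : ∀ t, 1 ≤ t → η (t + 1) ≤ η t)
    -- the experts' predictions and the observations, all in `[0,1]`:
    (f : ℕ → ℕ → ℝ) (hf : ∀ d t, f d t ∈ Set.Icc (0:ℝ) 1)
    (y : ℕ → ℝ) (hy : ∀ t, y t ∈ Set.Icc (0:ℝ) 1)
    -- the weights:
    (p : ℕ → ℕ → ℝ)
    (hp_init : p 1 2 = 1)
    (hp_update : ∀ t, 2 ≤ t → ∀ d, 1 ≤ d → d ≤ D t →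
      p d (t + 1) = ((D t : ℝ) / (D (t + 1) : ℝ)) *
        (p d t ^ (η (t + 1) / η t) * Real.exp (-(η (t + 1)) * ℓ (f d t) (y t))) /
        (∑ k ∈ Finset.Icc 1 (D t),
          p k t ^ (η (t + 1) / η t) * Real.exp (-(η (t + 1)) * ℓ (f k t) (y t))))
    (hp_enter : ∀ t, 2 ≤ t → D (t + 1) = D t + 1 →
      p (D (t + 1)) (t + 1) = 1 / (D (t + 1) : ℝ)) :
    ∀ T, 2 ≤ T → ∀ d, 1 ≤ d → td d ≤ T →
      ∑ t ∈ Finset.Icc (td d) T,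
          (ℓ (∑ k ∈ Finset.Icc 1 (D t), p k t * f k t) (y t) - ℓ (f d t) (y t))
        ≤ (1 / η (T + 1)) * Real.log (D (T + 1))
          + (1 / 8) * ∑ t ∈ Finset.Icc (td d) T, η t :=
  stmt_10_general ℓ hℓ_val hℓ_conv td htd1 htd_mono D hD η hη_pos hη_mono f hf y hy p hp_init
    hp_update hp_enter
end

section
/- Let X be a convex and compact subset of a normed real vector space, let X be a random variable with values in X whose law is a regular Borel probability measure, and let Y be a random variable with values in [0,1]. Then inf over all Lipschitz functions f : X → [0,1] of E[ℓ(f(X), Y)] equals inf over all Borel-measurable functions f : X → [0,1] of E[ℓ(f(X), Y)]. -/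
/-!
A function Lipschitz on `𝒳` extends (McShane) to a Lipschitz, hence Borel, function on `E`, so
the Lipschitz infimum is at least the measurable one. Conversely, Lipschitz functions are dense
in `L¹` of any finite Borel measure on a metric space: thickened indicators of a closed set
converge boundedly to its indicator, and every finite Borel measure on a metric space is weakly
regular, so measurable sets are approximated by closed ones. Clamping to `[0,1]` only brings a
function closer to a `[0,1]`-valued one, and as `ℓ` is `M`-Lipschitz in its first argument,
replacing `f` by a Lipschitz `g` changes the risk by at most `M ∫ |g - f| d(law X)`.
-/

open MeasureTheory ProbabilityTheory Set Filter Topology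
open scoped ENNReal NNReal BoundedContinuousFunction

theorem abs_sub_le_one_of_mem_Icc {a b : ℝ} (ha : a ∈ Icc (0 : ℝ) 1) (hb : b ∈ Icc (0 : ℝ) 1) :
    |a - b| ≤ 1 :=
  abs_sub_le_of_nonneg_of_le ha.1 ha.2 hb.1 hb.2

theorem tendsto_eLpNorm_one_sub_of_tendsto_of_mem_Icc {α : Type*} [MeasurableSpace α]
    {μ : Measure α} [IsFiniteMeasure μ] {φ : ℕ → α → ℝ} {g : α → ℝ} (hφ : ∀ n, Measurable (φ n))
    (hg : Measurable g) (hφ01 : ∀ n x, φ n x ∈ Icc (0 : ℝ) 1) (hg01 : ∀ x, g x ∈ Icc (0 : ℝ) 1)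
    (hlim : ∀ x, Tendsto (φ · x) atTop (𝓝 (g x))) :
    Tendsto (fun n => eLpNorm (φ n - g) 1 μ) atTop (𝓝 0) := by
  simp_rw [eLpNorm_one_eq_lintegral_enorm]
  simpa using tendsto_lintegral_of_dominated_convergence (μ := μ) (f := 0) (fun _ => 1)
    (fun n => ((hφ n).sub hg).enorm)
    (fun n => ae_of_all _ fun x => by
      simpa [Real.enorm_eq_ofReal_abs] using abs_sub_le_one_of_mem_Icc (hφ01 n x) (hg01 x))
    (by simp) (ae_of_all _ fun x => by simpa using ((hlim x).sub_const (g x)).enorm)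

section LipschitzDense

variable {α : Type*} [PseudoMetricSpace α] [MeasurableSpace α] [BorelSpace α]
  {μ : Measure α} [IsFiniteMeasure μ]

theorem IsClosed.exists_lipschitzWith_eLpNorm_sub_indicator_le {F : Set α} (hF : IsClosed F)
    {ε : ℝ≥0∞} (hε : ε ≠ 0) :
    ∃ φ : α → ℝ, (∃ K, LipschitzWith K φ) ∧ eLpNorm (φ - F.indicator 1) 1 μ ≤ ε := by
  set φ : ℕ → α →ᵇ ℝ≥0 := fun n => thickenedIndicator (Nat.one_div_pos_of_nat (n := n)) F
  have hφ_lim : ∀ x, Tendsto (fun n => (φ n x : ℝ)) atTop (𝓝 (F.indicator 1 x)) := by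
    intro x
    have := NNReal.tendsto_coe.2 <| tendsto_pi_nhds.1 (thickenedIndicator_tendsto_indicator_closure
      (fun n => Nat.one_div_pos_of_nat (n := n)) tendsto_one_div_add_atTop_nhds_zero_nat F) x
    rw [hF.closure_eq] at this
    convert this using 2
    by_cases hx : x ∈ F <;> simp [hx]
  have hind_mem : ∀ x, F.indicator (1 : α → ℝ) x ∈ Icc (0 : ℝ) 1 := fun x => by
    by_cases hx : x ∈ F <;> simp [hx]
  have hconv := tendsto_eLpNorm_one_sub_of_tendsto_of_mem_Icc (μ := μ)
    (fun n => (φ n).continuous.measurable.coe_nnreal_real)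
    (measurable_const.indicator hF.measurableSet)
    (fun n x => ⟨(φ n x).2, thickenedIndicator_le_one _ F x⟩) hind_mem hφ_lim
  obtain ⟨n, hn⟩ := (hconv.eventually (ge_mem_nhds (pos_iff_ne_zero.2 hε))).exists
  exact ⟨fun x => φ n x, ⟨_, (LipschitzWith.subtype_val _).comp
    (lipschitzWith_thickenedIndicator _ F)⟩, hn⟩

theorem MeasurableSet.exists_lipschitzWith_eLpNorm_sub_indicator_le {s : Set α}
    (hs : MeasurableSet s) {ε : ℝ≥0∞} (hε : ε ≠ 0) :
    ∃ φ : α → ℝ, (∃ K, LipschitzWith K φ) ∧ eLpNorm (φ - s.indicator 1) 1 μ ≤ ε := by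
  obtain ⟨F, hFs, hF, hμF⟩ := hs.exists_isClosed_sdiff_lt (measure_ne_top μ s)
    (ENNReal.half_pos hε).ne'
  obtain ⟨φ, ⟨K, hK⟩, hφF⟩ := hF.exists_lipschitzWith_eLpNorm_sub_indicator_le (μ := μ)
    (ENNReal.half_pos hε).ne'
  refine ⟨φ, ⟨K, hK⟩, ?_⟩
  have hsplit : φ - s.indicator 1 = (φ - F.indicator 1) - (s \ F).indicator 1 := by
    rw [indicator_sdiff hFs]; abel
  calc eLpNorm (φ - s.indicator 1) 1 μ
      ≤ eLpNorm (φ - F.indicator 1) 1 μ + eLpNorm ((s \ F).indicator (1 : α → ℝ)) 1 μ := by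
        rw [hsplit]
        exact eLpNorm_sub_le (hK.continuous.aestronglyMeasurable.sub
          (aestronglyMeasurable_const.indicator hF.measurableSet))
          (aestronglyMeasurable_const.indicator (hs.diff hF.measurableSet)) le_rfl
    _ ≤ ε / 2 + ε / 2 := by
        gcongr
        change eLpNorm ((s \ F).indicator fun _ => (1 : ℝ)) 1 μ ≤ ε / 2
        rw [eLpNorm_indicator_const (hs.diff hF.measurableSet) one_ne_zero ENNReal.one_ne_top]
        simpa using hμF.le
    _ = ε := ENNReal.add_halves ε

theorem MemLp.exists_lipschitzWith_eLpNorm_sub_le {f : α → ℝ} (hf : MemLp f 1 μ) {ε : ℝ≥0∞}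
    (hε : ε ≠ 0) : ∃ g : α → ℝ, eLpNorm (f - g) 1 μ ≤ ε ∧ ∃ K, LipschitzWith K g := by
  refine hf.induction_dense ENNReal.one_ne_top _ (fun c s hs _ ε hε => ?_)
    (fun _ _ ⟨Kf, hf⟩ ⟨Kg, hg⟩ => ⟨Kf + Kg, hf.add hg⟩)
    (fun _ ⟨_, hK⟩ => hK.continuous.aestronglyMeasurable) hε
  obtain ⟨φ, ⟨K, hK⟩, hφ⟩ := hs.exists_lipschitzWith_eLpNorm_sub_indicator_le (μ := μ)
    (ε := ε / ‖c‖ₑ) (ENNReal.div_ne_zero.2 ⟨hε, enorm_ne_top⟩)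
  refine ⟨c • φ, ?_, ⟨_, (lipschitzWith_smul c).comp hK⟩⟩
  have : c • φ - s.indicator (fun _ => c) = c • (φ - s.indicator 1) := by
    ext x; by_cases hx : x ∈ s <;> simp [hx, mul_sub]
  rw [this, eLpNorm_const_smul]
  calc ‖c‖ₑ * eLpNorm (φ - s.indicator 1) 1 μ ≤ ‖c‖ₑ * (ε / ‖c‖ₑ) := by gcongr
    _ ≤ ε := ENNReal.mul_div_le

theorem exists_lipschitzWith_mem_Icc_integral_abs_sub_le {f : α → ℝ} (hf : Measurable f)
    (hf01 : ∀ x, f x ∈ Icc (0 : ℝ) 1) {ε : ℝ} (hε : 0 < ε) :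
    ∃ g : α → ℝ, (∃ K, LipschitzWith K g) ∧ (∀ x, g x ∈ Icc (0 : ℝ) 1) ∧
      ∫ x, |g x - f x| ∂μ ≤ ε := by
  have hf_mem : MemLp f 1 μ := .of_bound hf.aestronglyMeasurable 1
    (ae_of_all _ fun x => abs_le.2 ⟨by linarith [(hf01 x).1], (hf01 x).2⟩)
  obtain ⟨g, hfg, K, hK⟩ := MemLp.exists_lipschitzWith_eLpNorm_sub_le hf_mem
    (ENNReal.ofReal_pos.2 hε).ne'
  set g' : α → ℝ := fun x => projIcc 0 1 zero_le_one (g x)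
  have hg' : LipschitzWith K g' := by
    have := (LipschitzWith.subtype_val (Icc (0 : ℝ) 1)).comp
      ((LipschitzWith.projIcc zero_le_one).comp hK)
    rwa [one_mul, one_mul] at this
  refine ⟨g', ⟨K, hg'⟩, fun x => (projIcc 0 1 zero_le_one (g x)).2, ?_⟩
  have hclamp : eLpNorm (f - g') 1 μ ≤ eLpNorm (f - g) 1 μ := eLpNorm_mono fun x => by
    simpa [Real.norm_eq_abs, projIcc_of_mem _ (hf01 x)] using
      abs_projIcc_sub_projIcc (h := zero_le_one) (c := f x) (d := g x)
  calc ∫ x, |g' x - f x| ∂μ = (eLpNorm (f - g') 1 μ).toReal := by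
        rw [eLpNorm_one_eq_lintegral_enorm, ← integral_norm_eq_lintegral_enorm
          (hf.aestronglyMeasurable.sub hg'.continuous.aestronglyMeasurable)]
        simp [Real.norm_eq_abs, abs_sub_comm]
    _ ≤ ε := ENNReal.toReal_le_of_le_ofReal hε.le (hclamp.trans hfg)

end LipschitzDense

section Caratheodory

variable {Ω α β : Type*} [MeasurableSpace Ω] {μ : Measure Ω} [TopologicalSpace β]
  [TopologicalSpace.PseudoMetrizableSpace β]

theorem SimpleFunc.aestronglyMeasurable_apply {u : α → Ω → β}
    (hu : ∀ a, AEStronglyMeasurable (u a) μ) (s : SimpleFunc Ω α) :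
    AEStronglyMeasurable (fun ω => u (s ω) ω) μ := by
  have hcover : (⋃ a : s.range, s ⁻¹' {a.1}) = univ :=
    eq_univ_of_forall fun ω => mem_iUnion.2 ⟨⟨s ω, s.mem_range_self ω⟩, rfl⟩
  rw [← Measure.restrict_univ (μ := μ), ← hcover, aestronglyMeasurable_iUnion_iff]
  exact fun a => (hu a).restrict.congr <|
    ae_restrict_of_forall_mem (s.measurableSet_fiber a) fun ω (hω : s ω = a) => by simp only [hω]

theorem aestronglyMeasurable_apply_of_continuous [TopologicalSpace α] {u : α → Ω → β}
    (hu_cont : ∀ ω, Continuous (u · ω)) (hu_meas : ∀ a, AEStronglyMeasurable (u a) μ)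
    {h : Ω → α} (hh : StronglyMeasurable h) :
    AEStronglyMeasurable (fun ω => u (h ω) ω) μ :=
  aestronglyMeasurable_of_tendsto_ae atTop
    (fun n => SimpleFunc.aestronglyMeasurable_apply hu_meas (hh.approx n))
    (ae_of_all _ fun ω => ((hu_cont ω).tendsto _).comp (hh.tendsto_approx ω))

end Caratheodory

section Loss

variable {Ω : Type*} [MeasurableSpace Ω] {μ : Measure Ω} {Y : Ω → ℝ} {ℓ : ℝ → ℝ → ℝ} {K : ℝ≥0}

theorem aestronglyMeasurable_loss (hY01 : ∀ ω, Y ω ∈ Icc (0 : ℝ) 1)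
    (hℓ_lip : ∀ y ∈ Icc (0 : ℝ) 1, LipschitzOnWith K (fun x => ℓ x y) (Icc (0 : ℝ) 1))
    (hslice : ∀ x ∈ Icc (0 : ℝ) 1, AEStronglyMeasurable (fun ω => ℓ x (Y ω)) μ)
    {h : Ω → ℝ} (hh : Measurable h) (hh01 : ∀ ω, h ω ∈ Icc (0 : ℝ) 1) :
    AEStronglyMeasurable (fun ω => ℓ (h ω) (Y ω)) μ := by
  have hcont : ∀ ω, Continuous fun x : ℝ => ℓ (projIcc 0 1 zero_le_one x) (Y ω) := fun ω =>
    (hℓ_lip _ (hY01 ω)).continuousOn.comp_continuous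
      (continuous_subtype_val.comp continuous_projIcc) fun x => (projIcc 0 1 _ x).2
  have key := aestronglyMeasurable_apply_of_continuous hcont
    (fun x => hslice _ (projIcc 0 1 zero_le_one x).2) hh.stronglyMeasurable
  simpa [projIcc_of_mem _ (hh01 _)] using key

theorem integrable_loss [IsFiniteMeasure μ] (hY01 : ∀ ω, Y ω ∈ Icc (0 : ℝ) 1)
    (hℓ_val : ∀ x ∈ Icc (0 : ℝ) 1, ∀ y ∈ Icc (0 : ℝ) 1, ℓ x y ∈ Icc (0 : ℝ) 1)
    (hℓ_lip : ∀ y ∈ Icc (0 : ℝ) 1, LipschitzOnWith K (fun x => ℓ x y) (Icc (0 : ℝ) 1))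
    (hslice : ∀ x ∈ Icc (0 : ℝ) 1, AEStronglyMeasurable (fun ω => ℓ x (Y ω)) μ)
    {h : Ω → ℝ} (hh : Measurable h) (hh01 : ∀ ω, h ω ∈ Icc (0 : ℝ) 1) :
    Integrable (fun ω => ℓ (h ω) (Y ω)) μ := by
  refine .of_bound (aestronglyMeasurable_loss hY01 hℓ_lip hslice hh hh01) 1
    (ae_of_all _ fun ω => ?_)
  have := hℓ_val _ (hh01 ω) _ (hY01 ω)
  rw [Real.norm_of_nonneg this.1]
  exact this.2

theorem integral_loss_le_add [IsFiniteMeasure μ] (hY01 : ∀ ω, Y ω ∈ Icc (0 : ℝ) 1)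
    (hℓ_val : ∀ x ∈ Icc (0 : ℝ) 1, ∀ y ∈ Icc (0 : ℝ) 1, ℓ x y ∈ Icc (0 : ℝ) 1)
    (hℓ_lip : ∀ y ∈ Icc (0 : ℝ) 1, LipschitzOnWith K (fun x => ℓ x y) (Icc (0 : ℝ) 1))
    (hslice : ∀ x ∈ Icc (0 : ℝ) 1, AEStronglyMeasurable (fun ω => ℓ x (Y ω)) μ)
    {f g : Ω → ℝ} (hf : Measurable f) (hf01 : ∀ ω, f ω ∈ Icc (0 : ℝ) 1)
    (hg : Measurable g) (hg01 : ∀ ω, g ω ∈ Icc (0 : ℝ) 1) :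
    ∫ ω, ℓ (g ω) (Y ω) ∂μ ≤ ∫ ω, ℓ (f ω) (Y ω) ∂μ + K * ∫ ω, |g ω - f ω| ∂μ := by
  have hdist : Integrable (fun ω => |g ω - f ω|) μ :=
    .of_bound (hg.sub hf).abs.aestronglyMeasurable 1
      (ae_of_all _ fun ω => by simpa using abs_sub_le_one_of_mem_Icc (hg01 ω) (hf01 ω))
  rw [← integral_const_mul, ← integral_add (integrable_loss hY01 hℓ_val hℓ_lip hslice hf hf01)
    (hdist.const_mul _)]
  refine integral_mono (integrable_loss hY01 hℓ_val hℓ_lip hslice hg hg01)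
    ((integrable_loss hY01 hℓ_val hℓ_lip hslice hf hf01).add (hdist.const_mul _)) fun ω => ?_
  have := (hℓ_lip _ (hY01 ω)).dist_le_mul _ (hg01 ω) _ (hf01 ω)
  rw [Real.dist_eq, Real.dist_eq] at this
  linarith [le_abs_self (ℓ (g ω) (Y ω) - ℓ (f ω) (Y ω))]

theorem exists_lipschitzWith_integral_loss_le [IsFiniteMeasure μ] {E : Type*}
    [PseudoMetricSpace E] [MeasurableSpace E] [BorelSpace E] {s : Set E} {X : Ω → E}
    (hX : Measurable X) (hXs : ∀ ω, X ω ∈ s) (hY01 : ∀ ω, Y ω ∈ Icc (0 : ℝ) 1)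
    (hℓ_val : ∀ x ∈ Icc (0 : ℝ) 1, ∀ y ∈ Icc (0 : ℝ) 1, ℓ x y ∈ Icc (0 : ℝ) 1)
    (hℓ_lip : ∀ y ∈ Icc (0 : ℝ) 1, LipschitzOnWith K (fun x => ℓ x y) (Icc (0 : ℝ) 1))
    (hslice : ∀ x ∈ Icc (0 : ℝ) 1, AEStronglyMeasurable (fun ω => ℓ x (Y ω)) μ)
    {f : E → ℝ} (hf : Measurable f) (hf01 : ∀ x ∈ s, f x ∈ Icc (0 : ℝ) 1) {ε : ℝ} (hε : 0 < ε) :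
    ∃ g : E → ℝ, (∃ L, LipschitzWith L g) ∧ (∀ x, g x ∈ Icc (0 : ℝ) 1) ∧
      ∫ ω, ℓ (g (X ω)) (Y ω) ∂μ ≤ ∫ ω, ℓ (f (X ω)) (Y ω) ∂μ + ε := by
  set f' : E → ℝ := fun x => projIcc 0 1 zero_le_one (f x)
  have hf' : Measurable f' :=
    continuous_subtype_val.measurable.comp (continuous_projIcc.measurable.comp hf)
  have hf'01 : ∀ x, f' x ∈ Icc (0 : ℝ) 1 := fun x => (projIcc 0 1 zero_le_one (f x)).2
  have hff' : ∀ ω, f' (X ω) = f (X ω) := fun ω => by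
    simp [f', projIcc_of_mem _ (hf01 _ (hXs ω))]
  simp_rw [← hff']
  obtain ⟨g, ⟨L, hL⟩, hg01, hgf⟩ := exists_lipschitzWith_mem_Icc_integral_abs_sub_le
    (μ := μ.map X) hf' hf'01 (div_pos hε (by positivity : (0 : ℝ) < K + 1))
  refine ⟨g, ⟨L, hL⟩, hg01, ?_⟩
  have hgf' : ∫ ω, |g (X ω) - f' (X ω)| ∂μ ≤ ε / (K + 1) := by
    rwa [integral_map (f := fun x => |g x - f' x|) hX.aemeasurable
      (hL.continuous.measurable.sub hf').abs.aestronglyMeasurable] at hgf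
  calc ∫ ω, ℓ (g (X ω)) (Y ω) ∂μ
      ≤ ∫ ω, ℓ (f' (X ω)) (Y ω) ∂μ + K * ∫ ω, |g (X ω) - f' (X ω)| ∂μ :=
        integral_loss_le_add hY01 hℓ_val hℓ_lip hslice (hf'.comp hX) (fun ω => hf'01 _)
          (hL.continuous.measurable.comp hX) (fun ω => hg01 _)
    _ ≤ ∫ ω, ℓ (f' (X ω)) (Y ω) ∂μ + K * (ε / (K + 1)) := by gcongr
    _ ≤ ∫ ω, ℓ (f' (X ω)) (Y ω) ∂μ + ε := by
        gcongr
        rw [mul_div_assoc', div_le_iff₀ (by positivity)]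
        nlinarith

end Loss

theorem stmt_14_general {E : Type*} [NormedAddCommGroup E]
    [MeasurableSpace E] [BorelSpace E]
    (𝒳 : Set E)
    {Ω : Type*} [MeasureSpace Ω] [IsProbabilityMeasure (ℙ : Measure Ω)]
    (X : Ω → E) (hX : Measurable X) (hX𝒳 : ∀ ω, X ω ∈ 𝒳)
    (Y : Ω → ℝ) (hY01 : ∀ ω, Y ω ∈ Set.Icc (0:ℝ) 1)
    (M : ℝ)
    (ℓ : ℝ → ℝ → ℝ)
    (hℓ_val : ∀ x ∈ Set.Icc (0:ℝ) 1, ∀ y ∈ Set.Icc (0:ℝ) 1, ℓ x y ∈ Set.Icc (0:ℝ) 1)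
    (hℓ_lip : ∀ y ∈ Set.Icc (0:ℝ) 1,
      LipschitzOnWith M.toNNReal (fun x => ℓ x y) (Set.Icc (0:ℝ) 1)) :
    sInf {r : ℝ | ∃ f : E → ℝ, (∃ K : NNReal, LipschitzOnWith K f 𝒳) ∧
        (∀ x ∈ 𝒳, f x ∈ Set.Icc (0:ℝ) 1) ∧ r = ∫ ω, ℓ (f (X ω)) (Y ω)} =
    sInf {r : ℝ | ∃ f : E → ℝ, Measurable f ∧
        (∀ x ∈ 𝒳, f x ∈ Set.Icc (0:ℝ) 1) ∧ r = ∫ ω, ℓ (f (X ω)) (Y ω)} := by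
  set A := {r : ℝ | ∃ f : E → ℝ, (∃ K : NNReal, LipschitzOnWith K f 𝒳) ∧
    (∀ x ∈ 𝒳, f x ∈ Icc (0:ℝ) 1) ∧ r = ∫ ω, ℓ (f (X ω)) (Y ω)}
  set B := {r : ℝ | ∃ f : E → ℝ, Measurable f ∧
    (∀ x ∈ 𝒳, f x ∈ Icc (0:ℝ) 1) ∧ r = ∫ ω, ℓ (f (X ω)) (Y ω)}
  have hAB : A ⊆ B := by
    rintro _ ⟨f, ⟨K, hK⟩, hf01, rfl⟩
    obtain ⟨g, hg, hfg⟩ := hK.extend_real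
    refine ⟨g, hg.continuous.measurable, fun x hx => hfg hx ▸ hf01 x hx, ?_⟩
    simp only [hfg (hX𝒳 _)]
  have hB_nonneg : ∀ r ∈ B, 0 ≤ r := by
    rintro _ ⟨f, -, hf01, rfl⟩
    exact integral_nonneg fun ω => (hℓ_val _ (hf01 _ (hX𝒳 ω)) _ (hY01 ω)).1
  have hA_bdd : BddBelow A := ⟨0, fun r hr => hB_nonneg r (hAB hr)⟩
  have hconst : ∀ c ∈ Icc (0:ℝ) 1, ∫ ω, ℓ c (Y ω) ∈ A := fun c hc =>
    ⟨fun _ => c, ⟨0, (LipschitzWith.const c).lipschitzOnWith⟩, fun _ _ => hc, rfl⟩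
  have hA_ne : A.Nonempty := ⟨_, hconst 0 ⟨le_rfl, zero_le_one⟩⟩
  refine le_antisymm (le_csInf (hA_ne.mono hAB) ?_) (csInf_le_csInf ⟨0, hB_nonneg⟩ hA_ne hAB)
  rintro _ ⟨f, hf, hf01, rfl⟩
  -- `ℓ` need not be measurable in `y`: if a slice `ℓ c ∘ Y` is not a.e. measurable, its integral
  -- is the junk value `0`, a lower bound for every risk.
  by_cases hslice : ∀ x ∈ Icc (0:ℝ) 1, AEStronglyMeasurable (fun ω => ℓ x (Y ω)) ℙ
  · refine le_of_forall_pos_le_add fun ε hε => ?_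
    obtain ⟨g, ⟨K, hK⟩, hg01, hg⟩ := exists_lipschitzWith_integral_loss_le hX hX𝒳 hY01 hℓ_val
      hℓ_lip hslice hf hf01 hε
    exact (csInf_le hA_bdd ⟨g, ⟨K, hK.lipschitzOnWith⟩, fun x _ => hg01 x, rfl⟩).trans hg
  · push Not at hslice
    obtain ⟨c, hc, hc_meas⟩ := hslice
    calc sInf A ≤ ∫ ω, ℓ c (Y ω) := csInf_le hA_bdd (hconst c hc)
      _ = 0 := integral_non_aestronglyMeasurable hc_meas
      _ ≤ _ := hB_nonneg _ ⟨f, hf, hf01, rfl⟩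

/-- Lemma 7: if `X` is a random variable with values in a convex compact subset `𝒳` of a
normed real vector space whose law is a regular Borel probability measure, and `Y` takes
values in `[0,1]`, then for an `M`-Lipschitz (in its first argument) loss `ℓ`, the infimum
of `E[ℓ(f(X), Y)]` over Lipschitz functions `f : 𝒳 → [0,1]` equals the infimum over
Borel-measurable functions `f : 𝒳 → [0,1]`. -/
theorem stmt_14 {E : Type*} [NormedAddCommGroup E] [NormedSpace ℝ E]
    [MeasurableSpace E] [BorelSpace E]
    (𝒳 : Set E) (h𝒳_conv : Convex ℝ 𝒳) (h𝒳_comp : IsCompact 𝒳) (h𝒳_ne : 𝒳.Nonempty)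
    {Ω : Type*} [MeasureSpace Ω] [IsProbabilityMeasure (ℙ : Measure Ω)]
    (X : Ω → E) (hX : Measurable X) (hX𝒳 : ∀ ω, X ω ∈ 𝒳)
    -- the law of `X` is regular:
    (hreg : ∀ S ⊆ 𝒳, MeasurableSet S → ∀ ε : ℝ, 0 < ε →
      ∃ K V : Set E, IsCompact K ∧ IsOpen V ∧ K ⊆ S ∧ S ⊆ V ∧
        ((Measure.map X (ℙ : Measure Ω)) (V \ K)).toReal ≤ ε)
    (Y : Ω → ℝ) (hY : Measurable Y) (hY01 : ∀ ω, Y ω ∈ Set.Icc (0:ℝ) 1)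
    (M : ℝ) (hM : 0 ≤ M)
    (ℓ : ℝ → ℝ → ℝ)
    (hℓ_val : ∀ x ∈ Set.Icc (0:ℝ) 1, ∀ y ∈ Set.Icc (0:ℝ) 1, ℓ x y ∈ Set.Icc (0:ℝ) 1)
    (hℓ_lip : ∀ y ∈ Set.Icc (0:ℝ) 1,
      LipschitzOnWith M.toNNReal (fun x => ℓ x y) (Set.Icc (0:ℝ) 1)) :
    sInf {r : ℝ | ∃ f : E → ℝ, (∃ K : NNReal, LipschitzOnWith K f 𝒳) ∧
        (∀ x ∈ 𝒳, f x ∈ Set.Icc (0:ℝ) 1) ∧ r = ∫ ω, ℓ (f (X ω)) (Y ω)} =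
    sInf {r : ℝ | ∃ f : E → ℝ, Measurable f ∧
        (∀ x ∈ 𝒳, f x ∈ Set.Icc (0:ℝ) 1) ∧ r = ∫ ω, ℓ (f (X ω)) (Y ω)} :=
  stmt_14_general 𝒳 X hX hX𝒳 Y hY01 M ℓ hℓ_val hℓ_lip
end
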